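/- Let H be a finite simple graph on a nonempty vertex set V. Then H can be obtained from the complete graph on V through a finite sequence of erasures (where each step deletes a single exposed edge of the current graph) if and only if H is connected and chordal. -/

import Mathlib

variable {V : Type*}

/-- A maximal clique of `G`: a clique not properly contained in any other clique. -/
def IsMaxClique (G : SimpleGraph V) (s : Set V) : Prop :=
  G.IsClique s ∧ ∀ t : Set V, G.IsClique t → s ⊆ t → t = s

/-- `xy` is a facet edge of `G` if it is an edge and `{x, y}` is a maximal clique. -/
def IsFacetEdge (G : SimpleGraph V) (x y : V) : Prop :=
  G.Adj x y ∧ IsMaxClique G {x, y}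

/-- `xy` is an exposed edge of `G` if it is an edge contained in a unique maximal
clique and it is not a facet edge. -/
def IsExposedEdge (G : SimpleGraph V) (x y : V) : Prop :=
  G.Adj x y ∧ (∃! s : Set V, IsMaxClique G s ∧ x ∈ s ∧ y ∈ s) ∧ ¬ IsFacetEdge G x y

/-- A graph is chordal if every cycle of length at least four has a chord, i.e. an
edge of the graph joining two vertices of the cycle which is not an edge of the cycle. -/
def IsChordal (G : SimpleGraph V) : Prop :=
  ∀ ⦃v : V⦄ (w : G.Walk v v), w.IsCycle → 4 ≤ w.length →
    ∃ a b, a ∈ w.support ∧ b ∈ w.support ∧ G.Adj a b ∧ s(a, b) ∉ w.edges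

/-- `H` is obtained from `G` through an erasure: deletion of a single exposed edge. -/
def Erasure (G H : SimpleGraph V) : Prop :=
  ∃ x y : V, IsExposedEdge G x y ∧ H = G.deleteEdges {s(x, y)}

/-!
Erasing an exposed edge `xy` keeps the graph connected, because `x` and `y` have a common
neighbour, and keeps it chordal: a chordless cycle of length at least four in `G - xy` has `xy` as
its only chord in `G`, each of its two arcs between `x` and `y` carries a common neighbour of `x`
and `y` (by chordality of `G`), and these two lie in the unique maximal clique through `xy`, so
they are adjacent.

Conversely, a chordal graph that is not complete has a two-pair: nonadjacent vertices `x, y` all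
of whose chordless connecting paths have length two; a nonadjacent pair with the most common
neighbours is one. Adding the edge `xy` keeps the graph chordal, and `xy` is exposed in the new
graph since the common neighbours of `x` and `y` form a nonempty clique. Induction on the
missing edges concludes.
-/

open SimpleGraph

namespace SimpleGraph.Walk

variable {G : SimpleGraph V} {u v w x : V}

lemma two_le_length_of_not_adj (p : G.Walk u v) (hne : u ≠ v) (hadj : ¬G.Adj u v) :
    2 ≤ p.length := by
  by_contra! h
  interval_cases hp : p.length
  · exact hne (eq_of_length_eq_zero hp)
  · exact hadj (adj_of_length_eq_one hp)

lemma two_le_length_of_mem_support (p : G.Walk u v) (hw : w ∈ p.support) (hwu : w ≠ u)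
    (hwv : w ≠ v) : 2 ≤ p.length := by
  obtain ⟨q, r, rfl⟩ := mem_support_iff_exists_append.mp hw
  have hq : q.length ≠ 0 := fun h => hwu (eq_of_length_eq_zero h).symm
  have hr : r.length ≠ 0 := fun h => hwv (eq_of_length_eq_zero h)
  rw [length_append]
  omega

lemma IsPath.isCycle_cons_concat {p : G.Walk u v} (hp : p.IsPath) (huv : u ≠ v)
    (hw : w ∉ p.support) (hwu : G.Adj w u) (hvw : G.Adj v w) :
    (cons hwu (p.concat hvw)).IsCycle := by
  refine (cons_isCycle_iff _ _).mpr ⟨hp.concat hw _, fun h => ?_⟩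
  rw [edges_concat, List.concat_eq_append, List.mem_append, List.mem_singleton] at h
  rcases h with h | h
  · exact hw (p.fst_mem_support_of_mem_edges h)
  · rcases Sym2.eq_iff.mp h with ⟨h, -⟩ | ⟨-, h⟩
    · exact hvw.ne h.symm
    · exact huv h

lemma edges_eq_of_length_eq_one {p : G.Walk u v} (h : p.length = 1) : p.edges = [s(u, v)] := by
  cases p with
  | nil => simp at h
  | cons _ q => cases q with
    | nil => rfl
    | cons => simp at h

lemma exists_length_lt_of_isChord (p : G.Walk u v) {a b : V} (hab : G.Adj a b)
    (ha : a ∈ p.support) (hb : b ∈ p.support) (he : s(a, b) ∉ p.edges) :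
    ∃ q : G.Walk u v, q.length < p.length ∧ q.support ⊆ p.support := by
  have shortcut : ∀ {a b : V} (hab : G.Adj a b) (p₁ : G.Walk u a) (p₂ : G.Walk a b)
      (p₃ : G.Walk b v), s(a, b) ∉ p₂.edges →
      ∃ q : G.Walk u v, q.length < (p₁.append (p₂.append p₃)).length ∧
        q.support ⊆ (p₁.append (p₂.append p₃)).support := by
    intro a b hab p₁ p₂ p₃ he
    refine ⟨p₁.append (cons hab p₃), ?_, fun z hz => ?_⟩
    · have : 2 ≤ p₂.length := by
        by_contra! h
        interval_cases hl : p₂.length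
        · exact hab.ne (eq_of_length_eq_zero hl)
        · exact he (by simp [edges_eq_of_length_eq_one hl])
      simp only [length_append, length_cons]
      omega
    · simp only [mem_support_append_iff, support_cons, List.mem_cons] at hz ⊢
      rcases hz with hz | rfl | hz
      · exact .inl hz
      · exact .inr (.inl p₂.start_mem_support)
      · exact .inr (.inr hz)
  obtain ⟨p₁, r, rfl⟩ := mem_support_iff_exists_append.mp ha
  rcases (mem_support_append_iff _ _).mp hb with hb | hb
  · obtain ⟨p₀, p₂, rfl⟩ := mem_support_iff_exists_append.mp hb
    rw [← append_assoc] at he ⊢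
    exact shortcut hab.symm p₀ p₂ r fun h => he (by simp [edges_append, Sym2.eq_swap ▸ h])
  · obtain ⟨p₂, p₃, rfl⟩ := mem_support_iff_exists_append.mp hb
    exact shortcut hab p₁ p₂ p₃ fun h => he (by simp [edges_append, h])

lemma exists_isPath_isChordless_support_subset (p : G.Walk u v) :
    ∃ q : G.Walk u v, q.IsPath ∧ q.IsChordless ∧ q.support ⊆ p.support := by
  classical
  obtain ⟨q, hq, hmin⟩ := (measure fun q : G.Walk u v => q.length).wf.has_min
    {q | q.support ⊆ p.support} ⟨p, List.Subset.refl _⟩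
  have hsub : q.bypass.support ⊆ p.support :=
    List.Subset.trans q.support_bypass_subset_support hq
  refine ⟨q.bypass, q.bypass_isPath, isChordless_iff_forall_mem_edges.mpr ?_, hsub⟩
  intro a b ha hb hab
  by_contra he
  obtain ⟨r, hlt, hr⟩ := q.bypass.exists_length_lt_of_isChord hab ha hb he
  exact hmin r (List.Subset.trans hr hsub) (hlt.trans_le q.length_bypass_le_length)

lemma IsChordless.reverse {p : G.Walk u v} (h : p.IsChordless) : p.reverse.IsChordless := by
  simp only [isChordless_iff_forall_mem_edges, support_reverse, edges_reverse,
    List.mem_reverse] at h ⊢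
  exact h

lemma IsChordless.rotate [DecidableEq V] {c : G.Walk v v} (h : c.IsChordless)
    (hu : u ∈ c.support) : (c.rotate u hu).IsChordless := by
  rw [isChordless_iff_forall_mem_edges] at h ⊢
  intro a b ha hb hab
  rw [mem_support_rotate_iff] at ha hb
  exact (c.rotate_edges u hu).mem_iff.mpr (h ha hb hab)

lemma IsPath.eq_of_mem_support_append {p : G.Walk u v} {q : G.Walk v w}
    (hpq : (p.append q).IsPath) (hp : x ∈ p.support) (hq : x ∈ q.support) : x = v := by
  by_contra h
  exact hpq.ne_of_mem_support_of_append h hp hq rfl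

lemma IsChordless.of_append_left {p : G.Walk u v} {q : G.Walk v w}
    (hpq : (p.append q).IsPath) (h : (p.append q).IsChordless) : p.IsChordless := by
  refine isChordless_iff_forall_mem_edges.mpr fun a b ha hb hab => ?_
  have := h.mem_edges ((mem_support_append_iff _ _).mpr (.inl ha))
    ((mem_support_append_iff _ _).mpr (.inl hb)) hab
  rw [edges_append, List.mem_append] at this
  refine this.resolve_right fun he => hab.ne ?_
  rw [hpq.eq_of_mem_support_append ha (q.fst_mem_support_of_mem_edges he),
    hpq.eq_of_mem_support_append hb (q.snd_mem_support_of_mem_edges he)]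

lemma IsChordless.of_append_right {p : G.Walk u v} {q : G.Walk v w}
    (hpq : (p.append q).IsPath) (h : (p.append q).IsChordless) : q.IsChordless := by
  refine isChordless_iff_forall_mem_edges.mpr fun a b ha hb hab => ?_
  have := h.mem_edges ((mem_support_append_iff _ _).mpr (.inr ha))
    ((mem_support_append_iff _ _).mpr (.inr hb)) hab
  rw [edges_append, List.mem_append] at this
  refine this.resolve_left fun he => hab.ne ?_
  rw [hpq.eq_of_mem_support_append (p.fst_mem_support_of_mem_edges he) ha,
    hpq.eq_of_mem_support_append (p.snd_mem_support_of_mem_edges he) hb]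

lemma IsCycle.eq_or_eq_of_mem_support_append {p : G.Walk u v} {q : G.Walk v u}
    (hc : (p.append q).IsCycle) (hp : x ∈ p.support) (hq : x ∈ q.support) :
    x = u ∨ x = v := by
  have hnd := hc.support_nodup
  rw [tail_support_append, List.nodup_append] at hnd
  rw [mem_support_iff] at hp hq
  rcases hp with rfl | hp
  · exact .inl rfl
  rcases hq with rfl | hq
  · exact .inr rfl
  exact absurd rfl (hnd.2.2 x hp x hq)

lemma IsCycle.snd_eq_or_penultimate_eq {c : G.Walk u u} (hc : c.IsCycle)
    (h : s(u, w) ∈ c.edges) : w = c.snd ∨ w = c.penultimate := by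
  have : w ∈ c.toSubgraph.neighborSet u := by
    rw [Subgraph.mem_neighborSet, ← Subgraph.mem_edgeSet, mem_edges_toSubgraph]
    exact h
  simpa [hc.neighborSet_toSubgraph_endpoint] using this

lemma IsCycle.exists_cons_of_mem_edges {c : G.Walk u u} (hc : c.IsCycle) (hch : c.IsChordless)
    {x y : V} (he : s(x, y) ∈ c.edges) :
    ∃ (h : G.Adj y x) (p : G.Walk x y),
      (cons h p).IsCycle ∧ (cons h p).IsChordless ∧ (cons h p).length = c.length := by
  classical
  suffices ∃ c' : G.Walk y y,
      c'.IsCycle ∧ c'.IsChordless ∧ c'.length = c.length ∧ c'.snd = x by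
    obtain ⟨c', hc', hch', hlen, rfl⟩ := this
    refine ⟨c'.adj_snd hc'.not_nil, c'.tail, ?_⟩
    rw [c'.cons_tail_eq hc'.not_nil]
    exact ⟨hc', hch', hlen⟩
  have hy := c.snd_mem_support_of_mem_edges he
  have he' : s(y, x) ∈ (c.rotate y hy).edges :=
    (c.rotate_edges y hy).mem_iff.mpr (Sym2.eq_swap ▸ he)
  rcases (hc.rotate hy).snd_eq_or_penultimate_eq he' with h | h
  · exact ⟨_, hc.rotate hy, hch.rotate hy, length_rotate .., h.symm⟩
  · exact ⟨_, (hc.rotate hy).reverse, (hch.rotate hy).reverse, by simp, by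
      rw [snd_reverse, h]⟩

end SimpleGraph.Walk

open Walk

variable {G H : SimpleGraph V} {x y : V}

lemma isChordal_iff_isChordless :
    IsChordal G ↔
      ∀ ⦃v : V⦄ (c : G.Walk v v), c.IsCycle → c.IsChordless → c.length ≤ 3 := by
  refine ⟨fun h v c hc hch => ?_, fun h v c hc h4 => ?_⟩
  · by_contra! h4
    obtain ⟨a, b, ha, hb, hab, he⟩ := h c hc h4
    exact he (hch.mem_edges ha hb hab)
  · by_contra! hch
    have := h c hc (isChordless_iff_forall_mem_edges.mpr hch)
    omega

lemma isChordal_top : IsChordal (⊤ : SimpleGraph V) := by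
  rw [isChordal_iff_isChordless]
  intro v c hc hch
  by_contra! h4
  have hv : c.getVert 2 ≠ v := by
    rw [Ne, hc.getVert_endpoint_iff (by omega)]
    omega
  have := hc.snd_eq_or_penultimate_eq
    (hch.mem_edges c.start_mem_support (c.getVert_mem_support 2) ((top_adj _ _).mpr hv.symm))
  rcases this with h | h
  · have := hc.getVert_injOn (by simp; omega) (by simp; omega) h
    omega
  · have := hc.getVert_injOn (by simp; omega) (by simp; omega) h
    omega

/-- If `c` misses a vertex of the path, the cycle `c, x, …, y, c` has length at least four; its
chord must join `c` to an inner vertex, which splits the path into two shorter instances. -/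
lemma IsChordal.adj_of_isChordless (hG : IsChordal G) {p : G.Walk x y} (hp : p.IsPath)
    (hch : p.IsChordless) {c : V} (hc : c ∉ p.support) (hcx : G.Adj c x) (hcy : G.Adj c y) :
    ∀ z ∈ p.support, G.Adj c z := by
  induction hn : p.length using Nat.strong_induction_on generalizing x y with
  | _ n ih =>
  intro z hz
  by_contra hcz
  have split : ∀ b ∈ p.support, G.Adj c b → b ≠ x → b ≠ y → False := by
    intro b hb hcb hbx hby
    obtain ⟨q, r, hq, hr, rfl⟩ := hp.mem_support_iff_exists_append.mp hb
    have hq0 : q.length ≠ 0 := fun h => hbx (eq_of_length_eq_zero h).symm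
    have hr0 : r.length ≠ 0 := fun h => hby (eq_of_length_eq_zero h)
    rw [length_append] at hn
    rcases (mem_support_append_iff _ _).mp hz with hz | hz
    · exact hcz (ih _ (by omega) hq (hch.of_append_left hp)
        (fun h => hc ((mem_support_append_iff _ _).mpr (.inl h))) hcx hcb rfl z hz)
    · exact hcz (ih _ (by omega) hr (hch.of_append_right hp)
        (fun h => hc ((mem_support_append_iff _ _).mpr (.inr h))) hcb hcy rfl z hz)
  have h2 := p.two_le_length_of_mem_support hz (by rintro rfl; exact hcz hcx)
    (by rintro rfl; exact hcz hcy)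
  have hxy : x ≠ y := by
    rintro rfl
    rw [(isPath_iff_nil.mp hp).length_eq_zero] at h2
    omega
  obtain ⟨a, b, ha, hb, hab, he⟩ :=
    hG _ (hp.isCycle_cons_concat hxy hc hcx hcy.symm) (by simp; omega)
  simp only [support_cons, support_concat, List.mem_cons, List.mem_append, List.not_mem_nil,
    or_false, edges_cons, edges_concat, List.concat_eq_append, not_or] at ha hb he
  have chord :
      ∀ b ∈ p.support, G.Adj c b → s(c, b) ≠ s(c, x) → s(c, b) ≠ s(y, c) → False :=
    fun b hb hcb hbx hby => split b hb hcb (by rintro rfl; exact hbx rfl)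
      (by rintro rfl; exact hby Sym2.eq_swap)
  rcases ha with rfl | ha | rfl <;> rcases hb with rfl | hb | rfl
  all_goals first
    | exact hab.ne rfl
    | exact chord b hb hab he.1 he.2.2
    | exact chord a ha hab.symm (fun h => he.1 (Sym2.eq_swap.trans h))
        (fun h => he.2.2 (Sym2.eq_swap.trans h))
    | exact he.2.1 (hch.mem_edges ha hb hab)

lemma IsChordal.isClique_commonNeighbors (hG : IsChordal G) (hne : x ≠ y) (hxy : ¬G.Adj x y) :
    G.IsClique (G.commonNeighbors x y) := by
  intro u hu w hw huw
  rw [mem_commonNeighbors] at hu hw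
  let p : G.Walk x y := cons hw.1 (cons hw.2.symm nil)
  have hp : p.IsPath := by
    simp [p, hw.1.ne, hw.2.ne', hne]
  have hch : p.IsChordless := by
    rw [isChordless_iff_forall_mem_edges]
    intro a b ha hb hab
    simp only [p, support_cons, support_nil, List.mem_cons, List.not_mem_nil, or_false] at ha hb
    rcases ha with rfl | rfl | rfl <;> rcases hb with rfl | rfl | rfl <;>
      first | exact absurd hab.symm hxy | simp_all [p, Sym2.eq_swap]
  have hup : u ∉ p.support := by
    simp [p, hu.1.ne', hu.2.ne', huw]
  exact hG.adj_of_isChordless hp hch hup hu.1.symm hu.2.symm w (by simp [p])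

def IsTwoPair (G : SimpleGraph V) (x y : V) : Prop :=
  x ≠ y ∧ ¬G.Adj x y ∧ ∀ p : G.Walk x y, p.IsPath → p.IsChordless → p.length = 2

lemma IsTwoPair.exists_adj_adj_mem_support (h : IsTwoPair G x y) (p : G.Walk x y) :
    ∃ z ∈ p.support, G.Adj x z ∧ G.Adj z y := by
  obtain ⟨q, hq, hch, hsub⟩ := p.exists_isPath_isChordless_support_subset
  have hlen := h.2.2 q hq hch
  refine ⟨q.getVert 1, hsub (q.getVert_mem_support 1), ?_, ?_⟩
  · simpa using q.adj_getVert_succ (i := 0) (by omega)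
  · simpa [q.getVert_of_length_le hlen.le] using q.adj_getVert_succ (i := 1) (by omega)

/-- Each of the two arcs of the cycle between `x` and `y` carries a common neighbour of `x` and
`y`; these two are adjacent but not consecutive on the cycle. -/
lemma IsTwoPair.not_isChordless (h : IsTwoPair G x y) (hcl : G.IsClique (G.commonNeighbors x y))
    {u : V} {c : G.Walk u u} (hc : c.IsCycle) (hx : x ∈ c.support) (hy : y ∈ c.support) :
    ¬c.IsChordless := by
  classical
  intro hch
  obtain ⟨p, q, hpq⟩ :=
    mem_support_iff_exists_append.mp ((c.mem_support_rotate_iff x hx).mpr hy)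
  have hc' : (p.append q).IsCycle := hpq ▸ hc.rotate hx
  have hch' : (p.append q).IsChordless := hpq ▸ hch.rotate hx
  obtain ⟨z₁, hz₁, hxz₁, hz₁y⟩ := h.exists_adj_adj_mem_support p
  obtain ⟨z₂, hz₂, hxz₂, hz₂y⟩ := h.exists_adj_adj_mem_support q.reverse
  rw [support_reverse, List.mem_reverse] at hz₂
  have hsep : ∀ z, G.Adj x z → G.Adj z y → z ∈ p.support → z ∉ q.support := by
    intro z hxz hzy hp hq
    rcases hc'.eq_or_eq_of_mem_support_append hp hq with rfl | rfl
    · exact hxz.ne rfl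
    · exact hzy.ne rfl
  have hadj : G.Adj z₁ z₂ :=
    hcl (G.mem_commonNeighbors.mpr ⟨hxz₁, hz₁y.symm⟩) (G.mem_commonNeighbors.mpr
      ⟨hxz₂, hz₂y.symm⟩) (by rintro rfl; exact hsep z₁ hxz₁ hz₁y hz₁ hz₂)
  have := hch'.mem_edges ((mem_support_append_iff _ _).mpr (.inl hz₁))
    ((mem_support_append_iff _ _).mpr (.inr hz₂)) hadj
  rw [edges_append, List.mem_append] at this
  rcases this with he | he
  · exact hsep z₂ hxz₂ hz₂y (p.snd_mem_support_of_mem_edges he) hz₂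
  · exact hsep z₁ hxz₁ hz₁y hz₁ (q.fst_mem_support_of_mem_edges he)

lemma IsChordal.isTwoPair_deleteEdges (hG : IsChordal G) (hxy : G.Adj x y) :
    IsTwoPair (G.deleteEdges {s(x, y)}) x y := by
  have hle : G.deleteEdges {s(x, y)} ≤ G := deleteEdges_le _
  have hnadj : ¬(G.deleteEdges {s(x, y)}).Adj x y := by simp
  refine ⟨hxy.ne, hnadj, fun p hp hch => ?_⟩
  have h2 := p.two_le_length_of_not_adj hxy.ne hnadj
  by_contra! hlen
  have hC : (cons hxy.symm (p.mapLe hle)).IsCycle := by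
    refine (cons_isCycle_iff _ _).mpr ⟨hp.mapLe hle, fun he => ?_⟩
    rw [edges_mapLe_eq_edges] at he
    exact hnadj (p.adj_of_mem_edges he).symm
  obtain ⟨a, b, ha, hb, hab, he⟩ := hG _ hC (by simp; omega)
  simp only [support_cons, support_mapLe_eq_support, List.mem_cons, edges_cons,
    edges_mapLe_eq_edges, not_or] at ha hb he
  replace ha : a ∈ p.support := ha.elim (· ▸ p.end_mem_support) id
  replace hb : b ∈ p.support := hb.elim (· ▸ p.end_mem_support) id
  exact he.2 (hch.mem_edges ha hb
    (deleteEdges_adj.mpr ⟨hab, fun h => he.1 (h.trans Sym2.eq_swap)⟩))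

/-- A nonadjacent pair with the most common neighbours is a two-pair: on a longer chordless path
`x, x₁, x₂, …, y`, the pair `x, x₂` has all common neighbours of `x, y` and also `x₁`. -/
lemma IsChordal.exists_isTwoPair [Finite V] (hG : IsChordal G)
    (h : ∃ x y, x ≠ y ∧ ¬G.Adj x y) : ∃ x y, IsTwoPair G x y := by
  obtain ⟨⟨x, y⟩, ⟨hne, hxy⟩, hmax⟩ := Set.exists_max_image
    {e : V × V | e.1 ≠ e.2 ∧ ¬G.Adj e.1 e.2} (fun e => (G.commonNeighbors e.1 e.2).ncard)
    (Set.toFinite _) (by obtain ⟨x, y, h⟩ := h; exact ⟨(x, y), h⟩)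
  refine ⟨x, y, hne, hxy, fun p hp hch => ?_⟩
  have h2 := p.two_le_length_of_not_adj hne hxy
  by_contra! hlen
  have hinj :
      ∀ {i j}, i ≤ p.length → j ≤ p.length → p.getVert i = p.getVert j → i = j :=
    fun hi hj h => hp.getVert_injOn hi hj h
  have hx₁ : G.Adj x p.snd := p.adj_snd (not_nil_of_ne hne)
  have hx₁₂ : G.Adj p.snd (p.getVert 2) := p.adj_getVert_succ (i := 1) (by omega)
  have hx₁y : ¬G.Adj p.snd y := fun hadj => by
    have := hp.eq_penultimate_of_mem_edges
      (hch.mem_edges p.end_mem_support (p.getVert_mem_support 1) hadj.symm)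
    have := hinj (by omega) (by omega) this
    omega
  have hxx₂ : ¬G.Adj x (p.getVert 2) := fun hadj => by
    have := hp.eq_snd_of_mem_edges
      (hch.mem_edges p.start_mem_support (p.getVert_mem_support 2) hadj)
    have := hinj (by omega) (by omega) this
    omega
  have hx₂ : x ≠ p.getVert 2 := fun h => by
    have := hinj (by omega) (by omega) (p.getVert_zero.trans h)
    omega
  have hsub : insert p.snd (G.commonNeighbors x y) ⊆ G.commonNeighbors x (p.getVert 2) := by
    rintro c (rfl | hc)
    · exact G.mem_commonNeighbors.mpr ⟨hx₁, hx₁₂.symm⟩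
    rw [mem_commonNeighbors] at hc ⊢
    have hcp : c ∉ p.support := fun hcp => hx₁y <| by
      rw [← hp.eq_snd_of_mem_edges (hch.mem_edges p.start_mem_support hcp hc.1)]
      exact hc.2.symm
    exact ⟨hc.1, (hG.adj_of_isChordless hp hch hcp hc.1.symm hc.2.symm _
      (p.getVert_mem_support 2)).symm⟩
  have hlt := Set.ncard_lt_ncard ((Set.ssubset_insert fun hc => hx₁y
    ((G.mem_commonNeighbors.mp hc).2.symm)).trans_le hsub) (Set.toFinite _)
  exact absurd (hmax (x, p.getVert 2) ⟨hx₂, hxx₂⟩) (not_le.mpr hlt)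

lemma IsTwoPair.isChordal_sup_edge (h : IsTwoPair H x y) (hH : IsChordal H) :
    IsChordal (H ⊔ edge x y) := by
  have hle : H ≤ H ⊔ edge x y := le_sup_left
  have hedge : ∀ e ∈ (H ⊔ edge x y).edgeSet, e ≠ s(x, y) → e ∈ H.edgeSet := by
    intro e he hne
    simp only [edgeSet_sup, edgeSet_edge, Set.mem_union, Set.mem_sdiff,
      Set.mem_singleton_iff] at he
    tauto
  rw [isChordal_iff_isChordless]
  intro v c hc hch
  by_contra! h4
  by_cases hxy : s(x, y) ∈ c.edges
  · obtain ⟨hyx, p, hcyc, hch', hlen⟩ := hc.exists_cons_of_mem_edges hch hxy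
    rw [cons_isCycle_iff] at hcyc
    have hpH : ∀ e ∈ p.edges, e ∈ H.edgeSet := fun e he =>
      hedge e (p.edges_subset_edgeSet he) fun h => hcyc.2 (by rw [Sym2.eq_swap, ← h]; exact he)
    have hchH : (p.transfer H hpH).IsChordless := by
      rw [isChordless_iff_forall_mem_edges, support_transfer, edges_transfer]
      intro a b ha hb hab
      have := hch'.mem_edges (List.mem_cons_of_mem _ ha) (List.mem_cons_of_mem _ hb) (hle hab)
      rw [edges_cons, List.mem_cons] at this
      refine this.resolve_left fun he => h.2.1 ?_
      rcases Sym2.eq_iff.mp he with ⟨rfl, rfl⟩ | ⟨rfl, rfl⟩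
      · exact hab.symm
      · exact hab
    have := h.2.2 _ (hcyc.1.transfer hpH) hchH
    simp only [length_transfer, length_cons] at this hlen
    omega
  · have hcH : ∀ e ∈ c.edges, e ∈ H.edgeSet := fun e he =>
      hedge e (c.edges_subset_edgeSet he) fun h => hxy (h ▸ he)
    refine absurd (isChordal_iff_isChordless.mp hH _ (hc.transfer hcH) ?_) (by simp; omega)
    rw [isChordless_iff_forall_mem_edges, support_transfer, edges_transfer]
    exact fun a b ha hb hab => hch.mem_edges ha hb (hle hab)

lemma exists_isMaxClique_superset [Finite V] {t : Set V} (ht : G.IsClique t) :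
    ∃ s, IsMaxClique G s ∧ t ⊆ s := by
  obtain ⟨s, hts, hs⟩ := (Set.toFinite {s : Set V | G.IsClique s}).exists_le_maximal ht
  exact ⟨s, ⟨hs.prop, fun u hu hsu => (hs.le_of_ge hu hsu).antisymm hsu⟩, hts⟩

lemma IsExposedEdge.commonNeighbors_nonempty (h : IsExposedEdge G x y) :
    (G.commonNeighbors x y).Nonempty := by
  obtain ⟨hxy, -, hfacet⟩ := h
  by_contra hempty
  refine hfacet ⟨hxy, (isClique_pair.mpr fun _ => hxy), fun t ht hxyt => ?_⟩
  refine (Set.Subset.antisymm (fun z hz => ?_) hxyt)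
  by_contra hzxy
  simp only [Set.mem_insert_iff, Set.mem_singleton_iff, not_or] at hzxy
  exact hempty ⟨z, G.mem_commonNeighbors.mpr ⟨ht (hxyt (by simp)) hz (Ne.symm hzxy.1),
    ht (hxyt (by simp)) hz (Ne.symm hzxy.2)⟩⟩

lemma IsExposedEdge.isClique_commonNeighbors [Finite V] (h : IsExposedEdge G x y) :
    G.IsClique (G.commonNeighbors x y) := by
  obtain ⟨hxy, ⟨S, ⟨hS, -⟩, huniq⟩, -⟩ := h
  refine hS.1.subset fun z hz => ?_
  rw [mem_commonNeighbors] at hz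
  have htri : G.IsClique {x, y, z} := by
    simp [isClique_insert, hxy, hz.1, hz.2, Ne.symm, hxy.ne]
  obtain ⟨T, hT, hsub⟩ := exists_isMaxClique_superset htri
  exact huniq T ⟨hT, hsub (by simp), hsub (by simp)⟩ ▸ hsub (by simp)

lemma isExposedEdge_of_isClique_commonNeighbors (hxy : G.Adj x y)
    (hne : (G.commonNeighbors x y).Nonempty) (hcl : G.IsClique (G.commonNeighbors x y)) :
    IsExposedEdge G x y := by
  set S := insert x (insert y (G.commonNeighbors x y))
  have hS : G.IsClique S := by
    refine (hcl.insert fun z hz _ => (G.mem_commonNeighbors.mp hz).2).insert fun z hz hxz => ?_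
    rcases Set.mem_insert_iff.mp hz with rfl | hz
    · exact hxy
    · exact (G.mem_commonNeighbors.mp hz).1
  have hsup : ∀ t, G.IsClique t → x ∈ t → y ∈ t → t ⊆ S := by
    intro t ht hx hy z hz
    by_cases hzx : z = x
    · exact .inl hzx
    by_cases hzy : z = y
    · exact .inr (.inl hzy)
    exact .inr (.inr (G.mem_commonNeighbors.mpr
      ⟨ht hx hz (Ne.symm hzx), ht hy hz (Ne.symm hzy)⟩))
  have hmax : IsMaxClique G S := ⟨hS, fun t ht hSt => (hsup t ht (hSt (by simp [S]))
    (hSt (by simp [S]))).antisymm hSt⟩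
  refine ⟨hxy, ⟨S, ⟨hmax, by simp [S], by simp [S]⟩,
    fun T ⟨hT, hx, hy⟩ => (hT.2 S hS (hsup T hT.1 hx hy)).symm⟩, fun ⟨_, hfacet⟩ => ?_⟩
  obtain ⟨z, hz⟩ := hne
  have hzS : z ∈ ({x, y} : Set V) := hfacet.2 S hS (by simp [S, Set.insert_subset_insert]) ▸
    (show z ∈ S by simp [S, hz])
  rw [mem_commonNeighbors] at hz
  rcases hzS with h | h
  · exact hz.1.ne h.symm
  · exact hz.2.ne (Set.mem_singleton_iff.mp h).symm

lemma IsExposedEdge.connected_deleteEdges (h : IsExposedEdge G x y) (hG : G.Connected) :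
    (G.deleteEdges {s(x, y)}).Connected := by
  refine hG.connected_delete_edge_of_not_isBridge ?_
  obtain ⟨z, hz⟩ := h.commonNeighbors_nonempty
  rw [mem_commonNeighbors] at hz
  rw [isBridge_iff, not_not]
  have hxz : (G.deleteEdges {s(x, y)}).Adj x z := by simp [hz.1, hz.2.ne', hz.1.ne']
  have hzy : (G.deleteEdges {s(x, y)}).Adj z y := by simp [hz.2.symm, hz.1.ne', hz.2.ne']
  exact hxz.reachable.trans hzy.reachable

lemma IsExposedEdge.isChordal_deleteEdges [Finite V] (h : IsExposedEdge G x y)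
    (hG : IsChordal G) : IsChordal (G.deleteEdges {s(x, y)}) := by
  set H := G.deleteEdges {s(x, y)}
  have hle : H ≤ G := deleteEdges_le _
  have hcl : H.IsClique (H.commonNeighbors x y) := by
    intro a ha b hb hab
    rw [mem_commonNeighbors] at ha hb
    refine deleteEdges_adj.mpr ⟨h.isClique_commonNeighbors
      (G.mem_commonNeighbors.mpr ⟨hle ha.1, hle ha.2⟩)
      (G.mem_commonNeighbors.mpr ⟨hle hb.1, hle hb.2⟩) hab, ?_⟩
    simp [ha.1.ne', ha.2.ne']
  rw [isChordal_iff_isChordless]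
  intro v c hc hch
  by_contra! h4
  obtain ⟨a, b, ha, hb, hab, he⟩ :=
    hG (c.mapLe hle) ((isCycle_mapLe hle).mpr hc) (by simp; omega)
  rw [support_mapLe_eq_support] at ha hb
  rw [edges_mapLe_eq_edges] at he
  by_cases hxy : s(a, b) = s(x, y)
  · have hxy' : x ∈ c.support ∧ y ∈ c.support := by
      rcases Sym2.eq_iff.mp hxy with ⟨rfl, rfl⟩ | ⟨rfl, rfl⟩
      · exact ⟨ha, hb⟩
      · exact ⟨hb, ha⟩
    exact (hG.isTwoPair_deleteEdges h.1).not_isChordless hcl hc hxy'.1 hxy'.2 hch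
  · exact he (hch.mem_edges ha hb (deleteEdges_adj.mpr ⟨hab, hxy⟩))

lemma Erasure.connected (h : Erasure G H) (hG : G.Connected) : H.Connected := by
  obtain ⟨x, y, he, rfl⟩ := h
  exact he.connected_deleteEdges hG

lemma Erasure.isChordal [Finite V] (h : Erasure G H) (hG : IsChordal G) : IsChordal H := by
  obtain ⟨x, y, he, rfl⟩ := h
  exact he.isChordal_deleteEdges hG

lemma commonNeighbors_sup_edge (G : SimpleGraph V) (x y : V) :
    (G ⊔ edge x y).commonNeighbors x y = G.commonNeighbors x y := by
  ext z
  simp only [mem_commonNeighbors, sup_adj, edge_adj]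
  grind [Adj.ne]

lemma IsTwoPair.erasure_sup_edge (h : IsTwoPair H x y) (hH : IsChordal H)
    (hxy : H.Reachable x y) : Erasure (H ⊔ edge x y) H := by
  refine ⟨x, y, isExposedEdge_of_isClique_commonNeighbors ?_ ?_ ?_, ?_⟩
  · exact .inr ((edge_adj ..).mpr ⟨.inl ⟨rfl, rfl⟩, h.1⟩)
  · obtain ⟨p⟩ := hxy
    obtain ⟨z, -, hxz, hzy⟩ := h.exists_adj_adj_mem_support p
    rw [commonNeighbors_sup_edge]
    exact ⟨z, H.mem_commonNeighbors.mpr ⟨hxz, hzy.symm⟩⟩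
  · rw [commonNeighbors_sup_edge]
    exact (hH.isClique_commonNeighbors h.1 h.2.1).mono le_sup_left
  · show H = (H ⊔ edge x y) \ edge x y
    rw [sup_sdiff_right_self, H.sdiff_edge h.2.1]

theorem reflTransGen_erasure_top_of_connected_of_isChordal [Finite V] {H : SimpleGraph V}
    (hconn : H.Connected) (hH : IsChordal H) : Relation.ReflTransGen Erasure ⊤ H := by
  induction H using WellFoundedGT.induction with
  | _ H ih =>
  by_cases htop : H = ⊤
  · rw [htop]
  obtain ⟨x, y, h⟩ := hH.exists_isTwoPair <| by
    by_contra! hall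
    exact htop (eq_top_iff.mpr fun a b hab => hall a b ((top_adj a b).mp hab))
  exact (ih _ (H.lt_sup_edge x y h.1 h.2.1) (hconn.mono le_sup_left) (h.isChordal_sup_edge hH)).tail
    (h.erasure_sup_edge hH (hconn.preconnected x y))

/-- A graph on a nonempty finite vertex set can be obtained from the complete graph
through a finite sequence of erasures if and only if it is connected and chordal. -/
theorem erasure_sequence_iff_connected_chordal [Fintype V] [Nonempty V]
    (H : SimpleGraph V) :
    Relation.ReflTransGen Erasure (⊤ : SimpleGraph V) H ↔
      (H.Connected ∧ IsChordal H) := by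
  refine ⟨fun h => ?_, fun h => reflTransGen_erasure_top_of_connected_of_isChordal h.1 h.2⟩
  induction h with
  | refl => exact ⟨connected_top, isChordal_top⟩
  | tail _ he ih => exact ⟨he.connected ih.1, he.isChordal ih.2⟩
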